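/- Let p be a prime with p ≠ 2 and p ≠ 3. Then the equation w² = −p + 72pz⁴ has solutions z, w in each of the fields ℝ, ℚ₂, ℚ₃ and ℚ_p if and only if p ≡ 23 (mod 24). -/

import Mathlib

/-!
Write the equation as `w² = p (72 z⁴ - 1)`. Over `ℚ_q`, `q ∈ {2, 3}`, a solution is reduced modulo
a power of `q`: if `z` is integral then `w² ≡ -p` modulo the `q`-part of `72`, and otherwise
`(w / 6z²)² = 2p - p / (36 z⁴) ≡ 2p` modulo `q²`. The squares modulo `8`, `4` and `9` then force
`p ≡ 7 mod 8` and `p ≡ 2 mod 3`. Conversely, for `p ≡ 23 mod 24` Hensel's lemma gives `√(-p)` in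
`ℚ₂` and `ℚ₃` (take `z = 0`), and a root of `72 t⁴ = 1 + p` in `ℤ_p` (take `w = p`): modulo `p`,
`1 / 72` is a square because `2` is, and squares are fourth powers because `-1` is not a square.
-/

open Polynomial

namespace PadicInt

variable {q : ℕ} [Fact q.Prime]

theorem exists_mul_pow_eq_of_norm_lt {m c a : ℤ_[q]} {k : ℕ}
    (h : ‖m * a ^ k - c‖ < ‖m * k * a ^ (k - 1)‖ ^ 2) : ∃ t : ℤ_[q], m * t ^ k = c := by
  obtain ⟨t, ht, -⟩ := hensels_lemma (F := C m * X ^ k - C c) (a := a)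
    (by simpa [derivative_X_pow, mul_assoc] using h)
  exact ⟨t, sub_eq_zero.1 (by simpa using ht)⟩

theorem isSquare_toZModPow_of_norm_sq_sub_le {n : ℕ} {w : ℚ_[q]} {c : ℤ_[q]}
    (h : ‖w ^ 2 - c‖ ≤ (q : ℝ) ^ (-(n : ℤ))) : IsSquare (toZModPow n c) := by
  have hq : (q : ℝ) ^ (-(n : ℤ)) ≤ 1 :=
    zpow_le_one_of_nonpos₀ (mod_cast (Fact.out : q.Prime).one_le) (by omega)
  have hw2 : ‖w‖ ^ 2 ≤ 1 := by
    rw [← norm_pow, ← sub_add_cancel (w ^ 2) c]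
    exact (Padic.nonarchimedean _ _).trans (max_le (h.trans hq) c.norm_le_one)
  set W : ℤ_[q] := ⟨w, (pow_le_one_iff_of_nonneg (norm_nonneg w) two_ne_zero).1 hw2⟩
  have hker : W ^ 2 - c ∈ RingHom.ker (toZModPow n) := by
    rw [ker_toZModPow, ← norm_le_pow_iff_mem_span_pow]
    exact h
  rw [RingHom.mem_ker, map_sub, sub_eq_zero] at hker
  exact ⟨toZModPow n W, by rw [← hker, map_pow, sq]⟩

theorem toZMod_eq_zero_iff_norm_lt_one (x : ℤ_[q]) :
    toZMod x = 0 ↔ ‖x‖ < 1 := by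
  rw [← RingHom.mem_ker, ker_toZMod, IsLocalRing.mem_maximalIdeal, mem_nonunits]

end PadicInt

theorem FiniteField.isSquare_or_isSquare_neg {F : Type*} [Field F] [Fintype F]
    (h : ¬IsSquare (-1 : F)) (a : F) : IsSquare a ∨ IsSquare (-a) := by
  classical
  by_contra! ⟨ha, hna⟩
  have hmul := map_mul (quadraticChar F) (-1) a
  rw [neg_one_mul, quadraticChar_neg_one_iff_not_isSquare.2 ha,
    quadraticChar_neg_one_iff_not_isSquare.2 hna,
    quadraticChar_neg_one_iff_not_isSquare.2 h] at hmul
  norm_num at hmul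

theorem FiniteField.exists_pow_four_eq_of_isSquare {F : Type*} [Field F] [Fintype F]
    (h : ¬IsSquare (-1 : F)) {a : F} (ha : IsSquare a) : ∃ d : F, d ^ 4 = a := by
  obtain ⟨s, rfl⟩ := ha
  rcases isSquare_or_isSquare_neg h s with ⟨d, hd⟩ | ⟨d, hd⟩
  · exact ⟨d, by rw [hd]; ring⟩
  · exact ⟨d, by rw [show d ^ 4 = (d * d) ^ 2 by ring, ← hd]; ring⟩

theorem Padic.isSquare_neg_or_isSquare_two_mul_of_sq_eq {q : ℕ} [Fact q.Prime] {n : ℕ}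
    (h72 : (q : ℤ) ^ n ∣ 72) (h36 : ¬(q : ℤ) ^ 3 ∣ 36) {a : ℤ} {z w : ℚ_[q]} (h : w ^ 2 = -a + 72 * a * z ^ 4) :
    IsSquare ((-a : ℤ) : ZMod (q ^ n)) ∨ IsSquare ((2 * a : ℤ) : ZMod (q ^ 2)) := by
  have ha : ‖(a : ℚ_[q])‖ ≤ 1 := Padic.norm_int_le_one a
  by_cases hz : ‖z‖ ≤ 1
  · left
    rw [← map_intCast (PadicInt.toZModPow n)]
    apply PadicInt.isSquare_toZModPow_of_norm_sq_sub_le (w := w)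
    have h72' : ‖((72 : ℤ) : ℚ_[q])‖ ≤ (q : ℝ) ^ (-(n : ℤ)) :=
      (Padic.norm_int_le_pow_iff_dvd 72 n).2 h72
    have hdiff : w ^ 2 - ((-a : ℤ) : ℤ_[q]) = ((72 : ℤ) : ℚ_[q]) * a * z ^ 4 := by
      rw [h, PadicInt.coe_intCast]; push_cast; ring
    calc ‖w ^ 2 - ((-a : ℤ) : ℤ_[q])‖ = ‖((72 : ℤ) : ℚ_[q])‖ * ‖(a : ℚ_[q])‖ * ‖z‖ ^ 4 := by
          rw [hdiff, norm_mul, norm_mul, norm_pow]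
      _ ≤ (q : ℝ) ^ (-(n : ℤ)) * 1 * 1 := by gcongr; exact pow_le_one₀ (norm_nonneg z) hz
      _ = (q : ℝ) ^ (-(n : ℤ)) := by ring
  · right
    have hqz : (q : ℝ) ≤ ‖z‖ := by
      simpa using (Padic.norm_le_pow_iff_norm_lt_pow_add_one z 0).not.1 hz
    have h36' : (q : ℝ) ^ (-2 : ℤ) ≤ ‖((36 : ℤ) : ℚ_[q])‖ := by
      have := (Padic.norm_le_pow_iff_norm_lt_pow_add_one ((36 : ℤ) : ℚ_[q]) (-3)).not.1
        ((Padic.norm_int_le_pow_iff_dvd 36 3).not.2 h36)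
      simpa using this
    have hz0 : z ≠ 0 := by rintro rfl; simp at hz
    have hq0 : (0 : ℝ) < q := mod_cast (Fact.out : q.Prime).pos
    rw [← map_intCast (PadicInt.toZModPow 2)]
    apply PadicInt.isSquare_toZModPow_of_norm_sq_sub_le (w := w / (6 * z ^ 2))
    have key :
        (w / (6 * z ^ 2)) ^ 2 - ((2 * a : ℤ) : ℤ_[q]) = -a / (((36 : ℤ) : ℚ_[q]) * z ^ 4) := by
      rw [PadicInt.coe_intCast]
      push_cast
      field_simp
      linear_combination 36 * h
    calc ‖(w / (6 * z ^ 2)) ^ 2 - ((2 * a : ℤ) : ℤ_[q])‖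
        = ‖(a : ℚ_[q])‖ / (‖((36 : ℤ) : ℚ_[q])‖ * ‖z‖ ^ 4) := by
          rw [key]; simp only [norm_div, norm_neg, norm_mul, norm_pow]
      _ ≤ 1 / ((q : ℝ) ^ (-2 : ℤ) * (q : ℝ) ^ 4) := by gcongr
      _ = (q : ℝ) ^ (-((2 : ℕ) : ℤ)) := by
          rw [Nat.cast_ofNat, zpow_neg, zpow_ofNat]
          field_simp

theorem mod_eight_eq_seven_of_exists_padic_two {p : ℕ} (hp : p % 2 = 1)
    (h : ∃ z w : ℚ_[2], w ^ 2 = -(p : ℚ_[2]) + 72 * (p : ℚ_[2]) * z ^ 4) : p % 8 = 7 := by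
  obtain ⟨z, w, h⟩ := h
  have hval2 : (p : ZMod (2 ^ 2)).val % 2 = 1 := by rw [ZMod.val_natCast]; omega
  have hval8 : (p : ZMod (2 ^ 3)).val % 2 = 1 := by rw [ZMod.val_natCast]; omega
  rcases Padic.isSquare_neg_or_isSquare_two_mul_of_sq_eq (q := 2) (n := 3) (by norm_num)
    (by norm_num) (a := p) (by exact_mod_cast h) with h8 | h4
  · push_cast at h8
    have squares_mod_eight : ∀ x : ZMod (2 ^ 3), IsSquare (-x) → x.val % 2 = 1 → x.val = 7 := by
      decide
    simpa [ZMod.val_natCast] using squares_mod_eight _ h8 hval8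
  · push_cast at h4
    have squares_mod_four : ∀ x : ZMod (2 ^ 2), x.val % 2 = 1 → ¬IsSquare (2 * x) := by decide
    exact absurd h4 (squares_mod_four _ hval2)

theorem mod_three_eq_two_of_exists_padic_three {p : ℕ} (hp : p % 3 ≠ 0)
    (h : ∃ z w : ℚ_[3], w ^ 2 = -(p : ℚ_[3]) + 72 * (p : ℚ_[3]) * z ^ 4) : p % 3 = 2 := by
  obtain ⟨z, w, h⟩ := h
  have hval : (p : ZMod (3 ^ 2)).val % 3 ≠ 0 := by rw [ZMod.val_natCast]; omega
  have hsq := Padic.isSquare_neg_or_isSquare_two_mul_of_sq_eq (q := 3) (n := 2) (by norm_num)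
    (by norm_num) (a := p) (by exact_mod_cast h)
  push_cast at hsq
  have squares_mod_nine : ∀ x : ZMod (3 ^ 2),
      IsSquare (-x) ∨ IsSquare (2 * x) → x.val % 3 ≠ 0 → x.val % 3 = 2 := by
    decide
  simpa [ZMod.val_natCast, Nat.mod_mod_of_dvd] using squares_mod_nine _ hsq hval

theorem ZMod.natCast_two_pow_mul_three_pow_ne_zero {p : ℕ} [hp : Fact p.Prime] (hp2 : p ≠ 2)
    (hp3 : p ≠ 3) (a b : ℕ) : ((2 ^ a * 3 ^ b : ℕ) : ZMod p) ≠ 0 := by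
  rw [Ne, ZMod.natCast_eq_zero_iff]
  intro hdvd
  rcases (Nat.Prime.dvd_mul hp.out).1 hdvd with h | h
  · exact hp2 ((Nat.prime_dvd_prime_iff_eq hp.out Nat.prime_two).1 (hp.out.dvd_of_dvd_pow h))
  · exact hp3 ((Nat.prime_dvd_prime_iff_eq hp.out Nat.prime_three).1 (hp.out.dvd_of_dvd_pow h))

theorem ZMod.exists_mul_pow_four_eq_one {p : ℕ} [Fact p.Prime] (hp2 : p ≠ 2) (hp3 : p ≠ 3)
    (h : p % 8 = 7) : ∃ d : ZMod p, 72 * d ^ 4 = 1 := by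
  obtain ⟨t, ht⟩ := (ZMod.exists_sq_eq_two_iff hp2).2 (Or.inr h)
  have hneg : ¬IsSquare (-1 : ZMod p) := by rw [ZMod.exists_sq_eq_neg_one_iff]; omega
  have h72 : (72 : ZMod p) ≠ 0 := by
    simpa using ZMod.natCast_two_pow_mul_three_pow_ne_zero hp2 hp3 3 2
  have h72sq : IsSquare (72⁻¹ : ZMod p) :=
    ⟨(6 * t)⁻¹, by rw [← mul_inv]; congr 1; linear_combination 36 * ht⟩
  obtain ⟨d, hd⟩ := FiniteField.exists_pow_four_eq_of_isSquare hneg h72sq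
  exact ⟨d, by rw [hd, mul_inv_cancel₀ h72]⟩

theorem exists_padic_two_of_mod_eight {p : ℕ} (h : p % 8 = 7) :
    ∃ z w : ℚ_[2], w ^ 2 = -(p : ℚ_[2]) + 72 * (p : ℚ_[2]) * z ^ 4 := by
  have h1p : ‖((1 + p : ℤ) : ℤ_[2])‖ ≤ (2 : ℝ) ^ (-(3 : ℕ) : ℤ) := by
    exact_mod_cast PadicInt.norm_int_le_pow_iff_dvd.2 (show (2 : ℤ) ^ 3 ∣ 1 + p by omega)
  obtain ⟨t, ht⟩ := PadicInt.exists_mul_pow_eq_of_norm_lt (m := 1) (k := 2) (a := 1)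
    (c := -(p : ℤ_[2])) (by
      have h2 : ‖(2 : ℤ_[2])‖ = 2⁻¹ := by exact_mod_cast PadicInt.norm_p (p := 2)
      push_cast at h1p
      simp [h2]
      norm_num at h1p ⊢
      linarith)
  refine ⟨0, t, ?_⟩
  have := congrArg ((↑) : ℤ_[2] → ℚ_[2]) ht
  push_cast at this
  linear_combination this

theorem exists_padic_three_of_mod_three {p : ℕ} (h : p % 3 = 2) :
    ∃ z w : ℚ_[3], w ^ 2 = -(p : ℚ_[3]) + 72 * (p : ℚ_[3]) * z ^ 4 := by
  have h1p : ‖((1 + p : ℤ) : ℤ_[3])‖ < 1 :=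
    (PadicInt.norm_int_lt_one_iff_dvd _).2 (show (3 : ℤ) ∣ 1 + p by omega)
  obtain ⟨t, ht⟩ := PadicInt.exists_mul_pow_eq_of_norm_lt (m := 1) (k := 2) (a := 1)
    (c := -(p : ℤ_[3])) (by
      have h2 : ‖(2 : ℤ_[3])‖ = 1 := by
        exact_mod_cast (PadicInt.norm_natCast_eq_one_iff (p := 3) (n := 2)).2 (by norm_num)
      push_cast at h1p
      simpa [h2, add_comm] using h1p)
  refine ⟨0, t, ?_⟩
  have := congrArg ((↑) : ℤ_[3] → ℚ_[3]) ht
  push_cast at this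
  linear_combination this

theorem exists_padic_self_of_mod_eight {p : ℕ} [Fact p.Prime] (hp2 : p ≠ 2) (hp3 : p ≠ 3)
    (h : p % 8 = 7) : ∃ z w : ℚ_[p], w ^ 2 = -(p : ℚ_[p]) + 72 * (p : ℚ_[p]) * z ^ 4 := by
  obtain ⟨d, hd⟩ := ZMod.exists_mul_pow_four_eq_one hp2 hp3 h
  have h288 : (288 : ZMod p) ≠ 0 := by
    simpa using ZMod.natCast_two_pow_mul_three_pow_ne_zero hp2 hp3 5 2
  have hd0 : d ≠ 0 := by rintro rfl; simp at hd
  have hval : PadicInt.toZMod (d.val : ℤ_[p]) = d := by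
    rw [map_natCast, ZMod.natCast_zmod_val]
  obtain ⟨t, ht⟩ := PadicInt.exists_mul_pow_eq_of_norm_lt (m := (72 : ℕ)) (k := 4)
    (a := (d.val : ℤ_[p])) (c := 1 + p) (by
      have hlt : ‖((72 : ℕ) : ℤ_[p]) * (d.val : ℤ_[p]) ^ 4 - (1 + p)‖ < 1 := by
        rw [← PadicInt.toZMod_eq_zero_iff_norm_lt_one]
        simp only [map_sub, map_mul, map_pow, map_add, map_one, map_natCast, hval,
          ZMod.natCast_self]
        simp [hd]
      have hone : ‖((72 : ℕ) : ℤ_[p]) * ((4 : ℕ) : ℤ_[p]) * (d.val : ℤ_[p]) ^ (4 - 1)‖ = 1 := by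
        refine le_antisymm (PadicInt.norm_le_one _) (not_lt.1 fun hlt => ?_)
        rw [← PadicInt.toZMod_eq_zero_iff_norm_lt_one] at hlt
        simp only [map_mul, map_pow, map_natCast, hval] at hlt
        norm_num at hlt
        exact hlt.elim h288 hd0
      rwa [hone, one_pow])
  refine ⟨t, p, ?_⟩
  have := congrArg ((↑) : ℤ_[p] → ℚ_[p]) ht
  simp only [PadicInt.coe_mul, PadicInt.coe_pow, PadicInt.coe_add, PadicInt.coe_one,
    PadicInt.coe_natCast] at this
  push_cast at this
  linear_combination -(p : ℚ_[p]) * this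

theorem dual_Cnegp_locally_solvable_iff (p : ℕ) [Fact p.Prime] (hp2 : p ≠ 2) (hp3 : p ≠ 3) :
    ((∃ z w : ℝ, w ^ 2 = -(p : ℝ) + 72 * (p : ℝ) * z ^ 4) ∧
      (∃ z w : ℚ_[2], w ^ 2 = -(p : ℚ_[2]) + 72 * (p : ℚ_[2]) * z ^ 4) ∧
      (∃ z w : ℚ_[3], w ^ 2 = -(p : ℚ_[3]) + 72 * (p : ℚ_[3]) * z ^ 4) ∧
      (∃ z w : ℚ_[p], w ^ 2 = -(p : ℚ_[p]) + 72 * (p : ℚ_[p]) * z ^ 4)) ↔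
      p % 24 = 23 := by
  have hp : p.Prime := Fact.out
  have hodd : p % 2 = 1 := Nat.odd_iff.1 (hp.odd_of_ne_two hp2)
  have hp3' : p % 3 ≠ 0 := fun h ↦
    hp3 ((Nat.prime_dvd_prime_iff_eq Nat.prime_three hp).1 (Nat.dvd_of_mod_eq_zero h)).symm
  constructor
  · rintro ⟨-, h2, h3, -⟩
    have h8 := mod_eight_eq_seven_of_exists_padic_two hodd h2
    have h3 := mod_three_eq_two_of_exists_padic_three hp3' h3
    omega
  · intro h
    refine ⟨⟨1, √(71 * p), ?_⟩, exists_padic_two_of_mod_eight (by omega),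
      exists_padic_three_of_mod_three (by omega), exists_padic_self_of_mod_eight hp2 hp3 (by omega)⟩
    rw [Real.sq_sqrt (by positivity)]
    ring
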